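/- arXiv:1504.06430 — 3 statements merged into one kernel-verified Lean document; each statement's English description precedes it below -/
import Mathlib

section
/- Let H be a self-adjoint operator on a finite-dimensional Hilbert space h with spectral decomposition H = Σ_n ε_n P_n (distinct eigenvalues ε_n, spectral projections P_n), let V be an operator on h, and for a real number ω define V_ω = Σ_{(n,m): ε_n − ε_m = ω} P_m V P_n. Then for any density matrix ρ commuting with H and any two distinct real numbers ω ≠ ω', tr(ρ V_{ω'}* V_ω) = 0. -/
open Matrix ComplexOrder

open scoped BigOperators

/-- Let H = Σ_n ε_n P_n be self-adjoint with distinct eigenvalues ε_n and spectral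
projections P_n (Hermitian, mutually orthogonal, summing to 1), V an operator, and
V_ω := Σ_{ε_n−ε_m=ω} P_m V P_n. For any density matrix ρ commuting with H and distinct
ω ≠ ω', tr(ρ V_{ω'}* V_ω) = 0. -/
theorem trace_rho_V_omega_orthogonal (d : ℕ) (ι : Type) [Fintype ι] [DecidableEq ι]
    (ε : ι → ℝ) (hε : Function.Injective ε)
    (P : ι → Matrix (Fin d) (Fin d) ℂ)
    (hPherm : ∀ n, (P n).IsHermitian)
    (hPproj : ∀ n, P n * P n = P n)
    (hPorth : ∀ n m, n ≠ m → P n * P m = 0)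
    (hPsum : ∑ n, P n = 1)
    (H : Matrix (Fin d) (Fin d) ℂ)
    (hH : H = ∑ n, (ε n : ℂ) • P n)
    (V : Matrix (Fin d) (Fin d) ℂ)
    (Vw : ℝ → Matrix (Fin d) (Fin d) ℂ)
    (hVw : ∀ ω, Vw ω = ∑ n, ∑ m, if ε n - ε m = ω then P m * V * P n else 0)
    (ρ : Matrix (Fin d) (Fin d) ℂ)
    (hρ : ρ.PosSemidef) (hρtr : ρ.trace = 1) (hρH : ρ * H = H * ρ)
    (ω ω' : ℝ) (hωω' : ω ≠ ω') :
    (ρ * (Vw ω')ᴴ * Vw ω).trace = 0 := by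
  have hHP : ∀ n, H * P n = (ε n : ℂ) • P n := by
    intro n
    rw [hH, Finset.sum_mul, Finset.sum_eq_single n]
    · rw [smul_mul_assoc, hPproj]
    · intro m _ hmn; rw [smul_mul_assoc, hPorth m n hmn, smul_zero]
    · simp
  have hPH : ∀ m, P m * H = (ε m : ℂ) • P m := by
    intro m
    rw [hH, Finset.mul_sum, Finset.sum_eq_single m]
    · rw [mul_smul_comm, hPproj]
    · intro n _ hnm; rw [mul_smul_comm, hPorth m n (Ne.symm hnm), smul_zero]
    · simp
  have key : ∀ m n, m ≠ n → P m * ρ * P n = 0 := by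
    intro m n hmn
    have h1 : P m * ρ * (H * P n) = (ε n : ℂ) • (P m * ρ * P n) := by
      rw [hHP, Matrix.mul_smul]
    have h2 : P m * ρ * (H * P n) = (ε m : ℂ) • (P m * ρ * P n) := by
      calc P m * ρ * (H * P n) = P m * (ρ * H) * P n := by
            simp only [mul_assoc]
        _ = P m * (H * ρ) * P n := by rw [hρH]
        _ = (P m * H) * (ρ * P n) := by simp only [mul_assoc]
        _ = (ε m : ℂ) • (P m * ρ * P n) := by
            rw [hPH, Matrix.smul_mul, mul_assoc]
    have h3 : ((ε n : ℂ) - ε m) • (P m * ρ * P n) = 0 := by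
      rw [sub_smul, h1.symm.trans h2, sub_self]
    rcases smul_eq_zero.mp h3 with h | h
    · have h' : (ε n : ℂ) = ε m := sub_eq_zero.mp h
      have h'' : ε n = ε m := by exact_mod_cast h'
      exact absurd (hε h'').symm hmn
    · exact h
  rw [hVw ω, hVw ω']
  simp only [Matrix.conjTranspose_sum, Finset.mul_sum, Finset.sum_mul, Matrix.trace_sum]
  apply Finset.sum_eq_zero; intro n _
  apply Finset.sum_eq_zero; intro m _
  apply Finset.sum_eq_zero; intro a _
  apply Finset.sum_eq_zero; intro b _
  by_cases hc1 : ε n - ε m = ω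
  · by_cases hc2 : ε a - ε b = ω'
    · simp only [hc1, hc2, if_pos]
      simp only [Matrix.conjTranspose_mul, (hPherm a).eq, (hPherm b).eq]
      by_cases hbm : b = m
      · subst hbm
        have hna : n ≠ a := by
          intro he; subst he
          exact hωω' (hc1 ▸ hc2 ▸ rfl)
        have hz : P n * ρ * P a = 0 := key n a hna
        have e1 : ρ * (P a * (Vᴴ * P b)) * (P b * V * P n)
            = (ρ * P a * Vᴴ * P b * (P b * V)) * P n := by
          simp only [mul_assoc]
        rw [e1, Matrix.trace_mul_comm]
        have e2 : P n * (ρ * P a * Vᴴ * P b * (P b * V))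
            = (P n * ρ * P a) * (Vᴴ * P b * (P b * V)) := by
          simp only [mul_assoc]
        rw [e2, hz, Matrix.zero_mul, Matrix.trace_zero]
      · have hz : P b * P m = 0 := hPorth b m hbm
        have e1 : ρ * (P a * (Vᴴ * P b)) * (P m * V * P n)
            = ρ * P a * Vᴴ * (P b * P m) * (V * P n) := by
          simp only [mul_assoc]
        rw [e1, hz]
        simp
    · simp [hc2]
  · simp [hc1]
end

section
/- Let ρ be a positive definite operator and V an operator on a finite-dimensional complex Hilbert space, and let γ⁺, γ⁻ > 0. If (γ⁺)^{1/2} ρ^{1/2} V = (γ⁻)^{1/2} V ρ^{1/2}, then ρ commutes with V*V and with VV*. -/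
/-!
With `S = ρ^{1/2}` and `c = (γ⁻/γ⁺)^{1/2}` the hypothesis reads `S V = c V S`; since `S` is
self-adjoint and `c` real, taking adjoints gives `S V* = c⁻¹ V* S`. Moving `S` across `V* V` or
`V V*` therefore picks up `c` and `c⁻¹`, which cancel, so `S`, and hence `ρ = S²`, commutes
with both.
-/

open Matrix ComplexOrder

/-- The square root of a positive semidefinite matrix, as `Matrix.PosSemidef.sqrt` was defined
in the older Mathlib (since removed). -/
noncomputable def posSemidefSqrt {n : Type*} [Fintype n] [DecidableEq n] {A : Matrix n n ℂ}
    (hA : A.PosSemidef) : Matrix n n ℂ :=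
  hA.1.eigenvectorUnitary.1 * diagonal ((↑) ∘ (√·) ∘ hA.1.eigenvalues) *
    (star hA.1.eigenvectorUnitary : Matrix n n ℂ)

theorem commute_mul_of_mul_eq_smul {K A : Type*} [Field K] [Ring A] [Algebra K A] {S V W : A}
    {c : K} (hc : c ≠ 0) (hV : S * V = c • (V * S)) (hW : S * W = c⁻¹ • (W * S)) :
    Commute S (W * V) :=
  calc S * (W * V) = c⁻¹ • (W * (S * V)) := by
        rw [← mul_assoc, hW, smul_mul_assoc, mul_assoc]
    _ = W * V * S := by rw [hV, mul_smul_comm, smul_smul, inv_mul_cancel₀ hc, one_smul, mul_assoc]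

section StarAlgebra

variable {A : Type*} [Ring A] [StarRing A] [Algebra ℝ A] [StarModule ℝ A]

theorem IsSelfAdjoint.mul_star_eq_inv_smul_of_mul_eq_smul {S V : A} (hS : IsSelfAdjoint S)
    {c : ℝ} (hc : c ≠ 0) (h : S * V = c • (V * S)) :
    S * star V = c⁻¹ • (star V * S) := by
  have hstar : star V * S = c • (S * star V) := by
    simpa [star_mul, star_smul, hS.star_eq] using congrArg star h
  rw [hstar, smul_smul, inv_mul_cancel₀ hc, one_smul]

theorem IsSelfAdjoint.commute_star_mul_self_of_mul_eq_smul {S V : A} (hS : IsSelfAdjoint S)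
    {c : ℝ} (hc : c ≠ 0) (h : S * V = c • (V * S)) :
    Commute S (star V * V) ∧ Commute S (V * star V) := by
  have h' := hS.mul_star_eq_inv_smul_of_mul_eq_smul hc h
  exact ⟨commute_mul_of_mul_eq_smul hc h h',
    commute_mul_of_mul_eq_smul (inv_ne_zero hc) h' (by rwa [inv_inv])⟩

end StarAlgebra

section Sqrt

variable {n : Type*} [Fintype n] [DecidableEq n] {A : Matrix n n ℂ} (hA : A.PosSemidef)

theorem posSemidefSqrt_eq_conjStarAlgAut : posSemidefSqrt hA =
    Unitary.conjStarAlgAut ℂ _ hA.1.eigenvectorUnitary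
      (diagonal ((↑) ∘ (√·) ∘ hA.1.eigenvalues)) := rfl

theorem isSelfAdjoint_posSemidefSqrt : IsSelfAdjoint (posSemidefSqrt hA) := by
  rw [posSemidefSqrt_eq_conjStarAlgAut]
  refine IsSelfAdjoint.map ?_ _
  exact isHermitian_diagonal_of_self_adjoint _ (by ext i; simp)

theorem posSemidefSqrt_mul_self : posSemidefSqrt hA * posSemidefSqrt hA = A := by
  conv_rhs => rw [hA.1.spectral_theorem]
  rw [posSemidefSqrt_eq_conjStarAlgAut, ← map_mul, diagonal_mul_diagonal]
  congr 2
  ext i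
  simp [← Complex.ofReal_mul, Real.mul_self_sqrt (hA.eigenvalues_nonneg i)]

end Sqrt

/-- If ρ is positive definite, γ⁺, γ⁻ > 0, and
(γ⁺)^{1/2} ρ^{1/2} V = (γ⁻)^{1/2} V ρ^{1/2}, then ρ commutes with V*V and with VV*. -/
theorem commutes_of_sqrt_intertwining (d : ℕ) (ρ : Matrix (Fin d) (Fin d) ℂ)
    (hρ : ρ.PosDef) (V : Matrix (Fin d) (Fin d) ℂ)
    (γp γm : ℝ) (hγp : 0 < γp) (hγm : 0 < γm)
    (h : (Real.sqrt γp : ℂ) • (posSemidefSqrt hρ.posSemidef * V)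
        = (Real.sqrt γm : ℂ) • (V * posSemidefSqrt hρ.posSemidef)) :
    ρ * (Vᴴ * V) = (Vᴴ * V) * ρ ∧ ρ * (V * Vᴴ) = (V * Vᴴ) * ρ := by
  set S := posSemidefSqrt hρ.posSemidef
  have hγp' : √γp ≠ 0 := (Real.sqrt_pos.mpr hγp).ne'
  have hSV : S * V = (√γm / √γp) • (V * S) := by
    simp only [Complex.coe_smul] at h
    rw [div_eq_inv_mul, ← smul_smul, ← h, smul_smul, inv_mul_cancel₀ hγp', one_smul]
  obtain ⟨h₁, h₂⟩ :=
    (isSelfAdjoint_posSemidefSqrt hρ.posSemidef).commute_star_mul_self_of_mul_eq_smul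
      (div_ne_zero (Real.sqrt_pos.mpr hγm).ne' hγp') hSV
  rw [← posSemidefSqrt_mul_self hρ.posSemidef]
  exact ⟨(h₁.mul_left h₁).eq, (h₂.mul_left h₂).eq⟩
end

section
/- Let ρ be positive definite, V an operator on a finite-dimensional Hilbert space, γ⁺, γ⁻ > 0 with (γ⁺)^{1/2} ρ^{1/2} V = (γ⁻)^{1/2} V ρ^{1/2}. Then ρ V = (γ⁻/γ⁺) V ρ and ρ V* = (γ⁺/γ⁻) V* ρ. -/
open Matrix ComplexOrder

/-- The positive semidefinite square root of a positive semidefinite matrix, as defined in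
Mathlib (Dec 2024); removed from current Mathlib. -/
noncomputable def Matrix.PosSemidef.sqrt {n 𝕜 : Type*} [Fintype n] [RCLike 𝕜] [DecidableEq n]
    {A : Matrix n n 𝕜} (hA : A.PosSemidef) : Matrix n n 𝕜 :=
  hA.1.eigenvectorUnitary.1 * diagonal ((↑) ∘ (√·) ∘ hA.1.eigenvalues) *
    (star hA.1.eigenvectorUnitary : Matrix n n 𝕜)

namespace Matrix.PosSemidef

variable {n 𝕜 : Type*} [Fintype n] [RCLike 𝕜] [DecidableEq n] {A : Matrix n n 𝕜}

theorem sqrt_mul_self (hA : A.PosSemidef) : hA.sqrt * hA.sqrt = A := by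
  have hD : diagonal ((↑) ∘ (√·) ∘ hA.1.eigenvalues) * diagonal ((↑) ∘ (√·) ∘ hA.1.eigenvalues)
      = diagonal ((↑) ∘ hA.1.eigenvalues : n → 𝕜) := by
    rw [diagonal_mul_diagonal]
    congr 1
    funext i
    simp only [Function.comp_apply, ← RCLike.ofReal_mul, Real.mul_self_sqrt (hA.eigenvalues_nonneg i)]
  have hconj : hA.sqrt = Unitary.conjStarAlgAut 𝕜 _ hA.1.eigenvectorUnitary
      (diagonal ((↑) ∘ (√·) ∘ hA.1.eigenvalues)) := by
    rw [Unitary.conjStarAlgAut_apply]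
    rfl
  rw [hconj, ← map_mul, hD, ← hA.1.spectral_theorem]

theorem posSemidef_sqrt (hA : A.PosSemidef) : hA.sqrt.PosSemidef := by
  have hD : (diagonal ((↑) ∘ (√·) ∘ hA.1.eigenvalues : n → 𝕜)).PosSemidef :=
    PosSemidef.diagonal fun i => RCLike.ofReal_nonneg.mpr (Real.sqrt_nonneg _)
  exact hD.mul_mul_conjTranspose_same _

end Matrix.PosSemidef

section TwistedCommutation

variable {K A : Type*} {s v : A} {c : K}

theorem pow_mul_eq_smul_mul_pow_of_mul_eq_smul [CommMonoid K] [Monoid A] [MulAction K A]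
    [IsScalarTower K A A] [SMulCommClass K A A] (h : s * v = c • (v * s)) (n : ℕ) :
    s ^ n * v = c ^ n • (v * s ^ n) := by
  induction n with
  | zero => simp
  | succ n ih =>
    calc s ^ (n + 1) * v = s * (s ^ n * v) := by rw [pow_succ', mul_assoc]
      _ = c ^ n • (s * v * s ^ n) := by rw [ih, mul_smul_comm, mul_assoc]
      _ = c ^ (n + 1) • (v * s ^ (n + 1)) := by
        rw [h, smul_mul_assoc, smul_smul, pow_succ, pow_succ', mul_assoc]

theorem IsSelfAdjoint.mul_star_eq_inv_smul_of_mul_eq_smul_s10 [GroupWithZero K] [Star K] [Monoid A]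
    [StarMul A] [MulAction K A] [StarModule K A] (hs : IsSelfAdjoint s) (hc : IsSelfAdjoint c)
    (hc0 : c ≠ 0) (h : s * v = c • (v * s)) : s * star v = c⁻¹ • (star v * s) := by
  have hstar : star v * s = c • (s * star v) := by
    simpa only [star_mul, star_smul, hs.star_eq, hc.star_eq] using congrArg star h
  rw [hstar, inv_smul_smul₀ hc0]

end TwistedCommutation

/-- If ρ is positive definite, γ⁺, γ⁻ > 0, and
(γ⁺)^{1/2} ρ^{1/2} V = (γ⁻)^{1/2} V ρ^{1/2}, then ρV = (γ⁻/γ⁺)Vρ and ρV* = (γ⁺/γ⁻)V*ρ. -/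
theorem rho_V_commutation_of_sqrt_intertwining (d : ℕ) (ρ : Matrix (Fin d) (Fin d) ℂ)
    (hρ : ρ.PosDef) (V : Matrix (Fin d) (Fin d) ℂ)
    (γp γm : ℝ) (hγp : 0 < γp) (hγm : 0 < γm)
    (h : (Real.sqrt γp : ℂ) • (hρ.posSemidef.sqrt * V)
        = (Real.sqrt γm : ℂ) • (V * hρ.posSemidef.sqrt)) :
    ρ * V = ((γm / γp : ℝ) : ℂ) • (V * ρ) ∧ ρ * Vᴴ = ((γp / γm : ℝ) : ℂ) • (Vᴴ * ρ) := by
  set S := hρ.posSemidef.sqrt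
  have hSρ : S ^ 2 = ρ := (sq S).trans hρ.posSemidef.sqrt_mul_self
  have hS : IsSelfAdjoint S := hρ.posSemidef.posSemidef_sqrt.isHermitian.isSelfAdjoint
  set c : ℝ := √γm / √γp
  have hc0 : c ≠ 0 := by positivity
  have hc_sq : c ^ 2 = γm / γp := by rw [div_pow, Real.sq_sqrt hγm.le, Real.sq_sqrt hγp.le]
  have hSV : S * V = (c : ℂ) • (V * S) := by
    have hp0 : (√γp : ℂ) ≠ 0 := by exact_mod_cast (Real.sqrt_pos.mpr hγp).ne'
    rw [eq_inv_smul_iff₀ hp0 |>.mpr h, smul_smul, inv_mul_eq_div, ← Complex.ofReal_div]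
  have hSVH : S * Vᴴ = ((c⁻¹ : ℝ) : ℂ) • (Vᴴ * S) := by
    have := hS.mul_star_eq_inv_smul_of_mul_eq_smul_s10 (Complex.conj_ofReal c)
      (Complex.ofReal_ne_zero.mpr hc0) hSV
    simpa only [star_eq_conjTranspose, Complex.ofReal_inv] using this
  constructor
  · rw [← hSρ, pow_mul_eq_smul_mul_pow_of_mul_eq_smul hSV, ← Complex.ofReal_pow, hc_sq]
  · rw [← hSρ, pow_mul_eq_smul_mul_pow_of_mul_eq_smul hSVH, ← Complex.ofReal_pow, inv_pow, hc_sq,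
      inv_div]
end
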